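/- Let (X,◁) be a finite abelian quandle. Then the commutator subgroup of its structure group G(X,◁) is finite and is contained in the center of G(X,◁). -/

import Mathlib

variable {X : Type*}

/-- Quandle axioms for a binary operation `op` (right-translation convention):
self-distributivity, bijectivity of right translations, idempotence. -/
structure IsQuandleOp (op : X → X → X) : Prop where
  sd : ∀ a b c, op (op a b) c = op (op a c) (op b c)
  bij : ∀ b, Function.Bijective fun a => op a b
  idem : ∀ a, op a a = a

/-- A quandle operation is abelian if `(a ◁ b) ◁ c = (a ◁ c) ◁ b`. -/
def IsAbelianOp (op : X → X → X) : Prop :=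
  ∀ a b c, op (op a b) c = op (op a c) b

/-- The relators `g_a g_b (g_b g_{a ◁ b})⁻¹` of the structure group. -/
def structureRels (op : X → X → X) : Set (FreeGroup X) :=
  {w | ∃ a b : X,
    w = FreeGroup.of a * FreeGroup.of b * (FreeGroup.of b * FreeGroup.of (op a b))⁻¹}

/-- The structure group `⟨g_a, a ∈ X | g_a g_b = g_b g_{a ◁ b}⟩` of a quandle. -/
abbrev StructureGroup (op : X → X → X) : Type _ := PresentedGroup (structureRels op)

/-!
The right translations `ρ a` of an abelian quandle commute and satisfy `ρ (a ◁ b) = ρ a`, so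
`g_a ↦ ρ a` defines a homomorphism `φ : G → Perm X` with abelian image. The defining relations
extend to `g_a x = x g_{φ x a}` for every `x ∈ G`, so `ker φ` is central. Hence
`[G, G] ≤ ker φ ≤ Z(G)`, and `Z(G)` has finite index since `Perm X` is finite. A commutator
`⁅x, y⁆` only depends on the cosets `x Z(G)`, `y Z(G)`, so there are finitely many commutators,
and Schur's theorem makes `[G, G]` finite.
-/

open scoped commutatorElement

section CenterFiniteIndex

variable {G : Type*} [Group G]

theorem commutatorElement_mul_left_of_mem_center {z : G} (hz : z ∈ Subgroup.center G)
    (x y : G) : ⁅x * z, y⁆ = ⁅x, y⁆ := by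
  have h : z * y = y * z := (Subgroup.mem_center_iff.mp hz y).symm
  simp only [commutatorElement_def, mul_inv_rev]
  rw [mul_assoc x z y, h]
  group

theorem commutatorElement_mul_right_of_mem_center {z : G} (hz : z ∈ Subgroup.center G)
    (x y : G) : ⁅x, y * z⁆ = ⁅x, y⁆ := by
  have h : z * x⁻¹ = x⁻¹ * z := (Subgroup.mem_center_iff.mp hz x⁻¹).symm
  simp only [commutatorElement_def, mul_inv_rev]
  rw [← mul_assoc x y z, mul_assoc (x * y) z x⁻¹, h]
  group

variable (G) in
theorem finite_commutatorSet_of_finiteIndex_center [(Subgroup.center G).FiniteIndex] :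
    Finite (commutatorSet G) := by
  let Q := G ⧸ Subgroup.center G
  have : Finite Q := Subgroup.finite_quotient_of_finiteIndex
  refine ((Set.finite_range fun p : Q × Q => ⁅p.1.out, p.2.out⁆).subset ?_).to_subtype
  rintro _ ⟨x, y, rfl⟩
  obtain ⟨zx, hzx⟩ := QuotientGroup.mk_out_eq_mul (Subgroup.center G) x
  obtain ⟨zy, hzy⟩ := QuotientGroup.mk_out_eq_mul (Subgroup.center G) y
  refine ⟨((x : Q), (y : Q)), ?_⟩
  simp only [hzx, hzy, commutatorElement_mul_left_of_mem_center zx.2,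
    commutatorElement_mul_right_of_mem_center zy.2]

end CenterFiniteIndex

namespace PresentedGroup

variable {α G : Type*} [Group G] {rels : Set (FreeGroup α)}

theorem commute_map_of_forall_commute_map_of (f : PresentedGroup rels →* G) {g : G}
    (hg : ∀ a, Commute g (f (of a))) (x : PresentedGroup rels) : Commute g (f x) := by
  have hx : x ∈ (Subgroup.centralizer {g}).comap f :=
    generated_by rels _ (fun a => Subgroup.mem_comap.mpr
      (Subgroup.mem_centralizer_singleton_iff.mpr (hg a).eq.symm)) x
  exact (Subgroup.mem_centralizer_singleton_iff.mp (Subgroup.mem_comap.mp hx)).symm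

theorem commute_map_of_commute_map_of (f : PresentedGroup rels →* G)
    (h : ∀ a b, Commute (f (of a)) (f (of b))) (x y : PresentedGroup rels) :
    Commute (f x) (f y) :=
  commute_map_of_forall_commute_map_of f
    (fun b => (commute_map_of_forall_commute_map_of f (fun a => (h a b).symm) x).symm) y

theorem mem_center_of_forall_commute_of {x : PresentedGroup rels} (hx : ∀ a, Commute x (of a)) :
    x ∈ Subgroup.center (PresentedGroup rels) :=
  Subgroup.mem_center_iff.mpr fun y =>
    (commute_map_of_forall_commute_map_of (MonoidHom.id _) hx y).eq.symm

end PresentedGroup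

variable {op : X → X → X}

noncomputable def IsQuandleOp.rightPerm (hq : IsQuandleOp op) (b : X) : Equiv.Perm X :=
  Equiv.ofBijective _ (hq.bij b)

@[simp]
theorem IsQuandleOp.rightPerm_apply (hq : IsQuandleOp op) (b a : X) :
    hq.rightPerm b a = op a b :=
  rfl

theorem IsAbelianOp.commute_rightPerm (hab : IsAbelianOp op) (hq : IsQuandleOp op) (a b : X) :
    Commute (hq.rightPerm a) (hq.rightPerm b) :=
  Equiv.ext fun x => hab x b a

theorem IsAbelianOp.rightPerm_op (hab : IsAbelianOp op) (hq : IsQuandleOp op) (a b : X) :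
    hq.rightPerm (op a b) = hq.rightPerm a := by
  ext y
  obtain ⟨x, rfl⟩ := (hq.bij b).2 y
  simp only [IsQuandleOp.rightPerm_apply]
  rw [← hq.sd, hab]

namespace StructureGroup

open PresentedGroup

theorem of_mul_of (a b : X) :
    (of a : StructureGroup op) * of b = of b * of (op a b) := by
  have h := one_of_mem (rels := structureRels op) ⟨a, b, rfl⟩
  simp only [map_mul, map_inv] at h
  exact mul_inv_eq_one.mp h

variable (hq : IsQuandleOp op) (hab : IsAbelianOp op)

noncomputable def toPerm : StructureGroup op →* Equiv.Perm X :=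
  toGroup (f := hq.rightPerm) <| by
    rintro _ ⟨a, b, rfl⟩
    simp only [map_mul, map_inv, FreeGroup.lift_apply_of, hab.rightPerm_op hq,
      (hab.commute_rightPerm hq a b).eq, mul_inv_cancel]

@[simp]
theorem toPerm_of (a : X) : toPerm hq hab (of a) = hq.rightPerm a :=
  toGroup.of _

theorem commute_toPerm (x y : StructureGroup op) : Commute (toPerm hq hab x) (toPerm hq hab y) :=
  commute_map_of_commute_map_of _ (fun a b => by simpa using hab.commute_rightPerm hq a b) x y

theorem of_mul_eq_mul_of_toPerm (x : StructureGroup op) (a : X) :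
    of a * x = x * of (toPerm hq hab x a) := by
  have hx : x ∈ Subgroup.closure (Set.range (of : X → StructureGroup op)) := by
    rw [closure_range_of]
    exact Subgroup.mem_top x
  induction hx using Subgroup.closure_induction generalizing a with
  | mem _ hb =>
    obtain ⟨b, rfl⟩ := hb
    simpa using of_mul_of a b
  | one => simp
  | mul x y _ _ ihx ihy =>
    rw [← mul_assoc, ihx, mul_assoc, ihy, map_mul, (commute_toPerm hq hab x y).eq,
      Equiv.Perm.mul_apply, mul_assoc]
  | inv x _ ihx =>
    have h := ihx (toPerm hq hab x⁻¹ a)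
    rw [← Equiv.Perm.mul_apply, ← map_mul, mul_inv_cancel, map_one, Equiv.Perm.one_apply] at h
    rw [mul_inv_eq_iff_eq_mul, mul_assoc, h, inv_mul_cancel_left]

theorem ker_toPerm_le_center : (toPerm hq hab).ker ≤ Subgroup.center (StructureGroup op) :=
  fun x hx => mem_center_of_forall_commute_of fun a => by
    have h := of_mul_eq_mul_of_toPerm hq hab x a
    rw [MonoidHom.mem_ker.mp hx, Equiv.Perm.one_apply] at h
    exact h.symm

theorem commutator_le_ker_toPerm : commutator (StructureGroup op) ≤ (toPerm hq hab).ker := by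
  rw [commutator_def, Subgroup.commutator_le]
  intro x _ y _
  rw [MonoidHom.mem_ker, map_commutatorElement,
    commutatorElement_eq_one_iff_commute]
  exact commute_toPerm hq hab x y

end StructureGroup

open StructureGroup in
/-- For a finite abelian quandle, the commutator subgroup of its
structure group is finite and contained in the center. -/
theorem commutator_finite_and_central {X : Type*} [Finite X] (op : X → X → X)
    (hq : IsQuandleOp op) (hab : IsAbelianOp op) :
    Finite (commutator (StructureGroup op)) ∧
      commutator (StructureGroup op) ≤ Subgroup.center (StructureGroup op) := by
  have hker := ker_toPerm_le_center hq hab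
  have : (Subgroup.center (StructureGroup op)).FiniteIndex := Subgroup.finiteIndex_of_le hker
  have := finite_commutatorSet_of_finiteIndex_center (StructureGroup op)
  exact ⟨inferInstance, (commutator_le_ker_toPerm hq hab).trans hker⟩
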